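/- (Lemma on invariance of cones, part (c).) Suppose (X',Y') is a valid ping-pong table. Then, after possibly replacing (u',v',w') by (−u',−v',−w') (which does not change X' or Y'), two of the three generators of C' are positive scalar multiples of u = (1,-2,1) and v = (1,0,3) respectively. -/

import Mathlib

open Matrix

/-- The matrix `R`. -/
def R : Matrix (Fin 3) (Fin 3) ℝ := !![0,0,-1; 1,0,-1; 0,1,-1]

/-- The matrix `T`. -/
def T : Matrix (Fin 3) (Fin 3) ℝ := !![-1,0,0; 2,1,0; -4,0,1]

/-- The open cone generated by three vectors in `ℝ³`. -/
def cone3 (u' v' w' : Fin 3 → ℝ) : Set (Fin 3 → ℝ) :=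
  {p | ∃ a b c : ℝ, 0 < a ∧ 0 < b ∧ 0 < c ∧ p = a • u' + b • v' + c • w'}

/-- `X' = C' ∪ (−C')` where `C'` is the open cone generated by `u', v', w'`. -/
def Xset (u' v' w' : Fin 3 → ℝ) : Set (Fin 3 → ℝ) :=
  cone3 u' v' w' ∪ (-(cone3 u' v' w'))

/-- `Y' = R·X' ∪ R²·X' ∪ R³·X'`. -/
def Yset (u' v' w' : Fin 3 → ℝ) : Set (Fin 3 → ℝ) :=
  R.mulVec '' Xset u' v' w' ∪ (R ^ 2).mulVec '' Xset u' v' w' ∪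
    (R ^ 3).mulVec '' Xset u' v' w'

/-- `(X',Y')` is a valid ping-pong table: `X' ∩ Y' = ∅` and `T·Y' ⊆ X'`
(the condition that `R, R², R³` map `X'` into `Y'` holds by construction). -/
def IsValidTable (u' v' w' : Fin 3 → ℝ) : Prop :=
  Xset u' v' w' ∩ Yset u' v' w' = ∅ ∧
    T.mulVec '' Yset u' v' w' ⊆ Xset u' v' w'

namespace ConeInv
abbrev V : Type := Fin 3 → ℝ
noncomputable section
def uu : V := ![1,-2,1]
def vv : V := ![1,0,3]
def AA : Matrix (Fin 3) (Fin 3) ℝ := T * R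
def BB : Matrix (Fin 3) (Fin 3) ℝ := T * R^3
def ff (x : V) : ℝ := x 0 + x 1 + x 2
def hh (x : V) : ℝ := 3*x 0 - x 1 - x 2

lemma AA_apply (x : V) : AA.mulVec x = ![x 2, x 0 - 3*x 2, x 1 + 3*x 2] := by
  funext i
  fin_cases i <;>
    (simp [AA, R, T, Matrix.mulVec, dotProduct, Fin.sum_univ_three, Matrix.mul_apply];
     (try ring_nf); (try tauto))

lemma BB_apply (x : V) : BB.mulVec x = ![x 0 - x 1, -3*x 0 + 2*x 1 + x 2, 3*x 0 - 4*x 1] := by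
  funext i
  fin_cases i <;>
    (simp [BB, R, T, pow_succ, Matrix.mulVec, dotProduct, Fin.sum_univ_three,
      Matrix.mul_apply];
     (try ring_nf); (try tauto))

lemma ff_lin : IsLinearMap ℝ ff := by
  constructor <;> intros <;> simp [ff] <;> ring

lemma hh_lin : IsLinearMap ℝ hh := by
  constructor <;> intros <;> simp [hh] <;> ring

lemma AA_u : AA.mulVec uu = uu := by
  rw [AA_apply]; funext i; fin_cases i <;> norm_num [uu, Matrix.cons_val_two]

lemma BB_v : BB.mulVec vv = vv := by
  rw [BB_apply]; funext i; fin_cases i <;> norm_num [vv, Matrix.cons_val_two]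

lemma AA_sq (x : V) :
    AA.mulVec (AA.mulVec x) = (2:ℝ) • AA.mulVec x - x + ff x • uu := by
  rw [AA_apply, AA_apply]
  funext i; fin_cases i <;> simp [ff, uu, AA_apply, Matrix.vecHead, Matrix.vecTail] <;> ring

lemma BB_sq (x : V) :
    BB.mulVec (BB.mulVec x) = (2:ℝ) • BB.mulVec x - x + hh x • vv := by
  rw [BB_apply, BB_apply]
  funext i; fin_cases i <;> simp [hh, vv, BB_apply, Matrix.vecHead, Matrix.vecTail] <;> ring

lemma ff_AA (x : V) : ff (AA.mulVec x) = ff x := by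
  rw [AA_apply]; simp [ff]; ring

lemma hh_BB (x : V) : hh (BB.mulVec x) = hh x := by
  rw [BB_apply]; simp [hh]; ring

lemma ker_AA (x : V) (hx : AA.mulVec x = x) : ∃ c : ℝ, x = c • uu := by
  rw [AA_apply] at hx
  have h0 := congrFun hx 0
  have h1 := congrFun hx 1
  have h2 := congrFun hx 2
  simp at h0 h1 h2
  refine ⟨x 0, ?_⟩
  funext i; fin_cases i <;> simp [uu] <;> linarith

lemma ker_BB (x : V) (hx : BB.mulVec x = x) : ∃ c : ℝ, x = c • vv := by
  rw [BB_apply] at hx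
  have h0 := congrFun hx 0
  have h1 := congrFun hx 1
  have h2 := congrFun hx 2
  simp at h0 h1 h2
  refine ⟨x 0, ?_⟩
  funext i; fin_cases i <;> simp [vv] <;> linarith

lemma uu_ne : uu ≠ (0 : V) := by
  intro h; have := congrFun h 0; simp [uu] at this

lemma vv_ne : vv ≠ (0 : V) := by
  intro h; have := congrFun h 0; simp [vv] at this

lemma ff_vv : ff vv = 4 := by norm_num [ff, vv, Matrix.cons_val_two]
lemma hh_uu : hh uu = 4 := by norm_num [hh, uu, Matrix.cons_val_two]
lemma ff_uu : ff uu = 0 := by norm_num [ff, uu, Matrix.cons_val_two]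
lemma hh_vv : hh vv = 0 := by norm_num [hh, vv, Matrix.cons_val_two]
lemma ff_ne : ∃ z : V, ff z ≠ 0 := ⟨vv, by rw [ff_vv]; norm_num⟩
lemma hh_ne : ∃ z : V, hh z ≠ 0 := ⟨uu, by rw [hh_uu]; norm_num⟩

lemma mem_cone_iff (u' v' w' : V) (b : Module.Basis (Fin 3) ℝ V)
    (hb : ∀ i, b i = ![u', v', w'] i) (x : V) :
    (∃ a c d : ℝ, 0 < a ∧ 0 < c ∧ 0 < d ∧ x = a • u' + c • v' + d • w')
      ↔ ∀ i, 0 < b.repr x i := by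
  have h0 : b 0 = u' := hb 0
  have h1 : b 1 = v' := hb 1
  have h2 : b 2 = w' := hb 2
  constructor
  · rintro ⟨a, c, d, ha, hc, hd, rfl⟩
    have hr : b.repr (a • u' + c • v' + d • w')
        = a • Finsupp.single 0 1 + c • Finsupp.single 1 1 + d • Finsupp.single 2 1 := by
      rw [← h0, ← h1, ← h2]
      simp [Module.Basis.repr_self]
    intro i
    rw [hr]
    fin_cases i <;> simp [Finsupp.single_apply] <;> assumption
  · intro h
    refine ⟨b.repr x 0, b.repr x 1, b.repr x 2, h 0, h 1, h 2, ?_⟩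
    have := b.sum_repr x
    rw [Fin.sum_univ_three, h0, h1, h2] at this
    exact this.symm

lemma repr_comb (u' v' w' : V) (b : Module.Basis (Fin 3) ℝ V)
    (hb : ∀ i, b i = ![u', v', w'] i) (a c d : ℝ) (i : Fin 3) :
    b.repr (a • u' + c • v' + d • w') i = ![a, c, d] i := by
  have hr : b.repr (a • u' + c • v' + d • w')
      = a • Finsupp.single 0 1 + c • Finsupp.single 1 1 + d • Finsupp.single 2 1 := by
    have h0 : b 0 = u' := hb 0
    have h1 : b 1 = v' := hb 1
    have h2 : b 2 = w' := hb 2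
    rw [← h0, ← h1, ← h2]
    simp [Module.Basis.repr_self]
  rw [hr]
  fin_cases i <;> simp [Finsupp.single_apply]

lemma eps_nonneg (a c : ℝ) (h : ∀ ε : ℝ, 0 < ε → 0 ≤ a + ε * c) : 0 ≤ a := by
  by_contra ha
  push_neg at ha
  have hεpos : 0 < -a / (2 * (|c| + 1)) := div_pos (by linarith) (by positivity)
  have h2 := h _ hεpos
  have h3 : (-a / (2 * (|c| + 1))) * c ≤ (-a / (2 * (|c| + 1))) * |c| :=
    mul_le_mul_of_nonneg_left (le_abs_self c) (le_of_lt hεpos)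
  have h4 : (-a / (2 * (|c| + 1))) * |c| ≤ -a / 2 := by
    rw [div_mul_eq_mul_div, div_le_div_iff₀ (by positivity) (by norm_num)]
    nlinarith [abs_nonneg c]
  linarith


lemma leadcoeff2 (c0 c1 c2 : ℝ) (h : ∀ n : ℕ, 0 ≤ c0 + c1*n + c2*n^2) : 0 ≤ c2 := by
  by_contra hc
  push_neg at hc
  obtain ⟨n, hn⟩ := exists_nat_gt ((|c0| + |c1|) / (-c2))
  have hN : ((n+1 : ℕ) : ℝ) > (|c0| + |c1|) / (-c2) := by push_cast; push_cast at hn; linarith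
  set N := ((n+1:ℕ):ℝ) with hNdef
  have h1 : (1:ℝ) ≤ N := by rw [hNdef]; push_cast; linarith [Nat.cast_nonneg (α := ℝ) n]
  have hNpos : (0:ℝ) < N := by linarith
  have h2 : (|c0| + |c1|) < N * (-c2) := (div_lt_iff₀ (by linarith)).mp hN
  have := h (n+1)
  have k1 : c0 ≤ |c0| * N := le_trans (le_abs_self c0) (le_mul_of_one_le_right (abs_nonneg _) h1)
  have k2 : c1 * N ≤ |c1| * N := mul_le_mul_of_nonneg_right (le_abs_self c1) (le_of_lt hNpos)
  nlinarith [mul_lt_mul_of_pos_right h2 hNpos]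

lemma leadcoeff4 (c0 c1 c2 c3 c4 : ℝ)
    (h : ∀ n : ℕ, 0 ≤ c0 + c1*n + c2*n^2 + c3*n^3 + c4*n^4) : 0 ≤ c4 := by
  by_contra hc
  push_neg at hc
  obtain ⟨n, hn⟩ := exists_nat_gt ((|c0| + |c1| + |c2| + |c3|) / (-c4))
  have hN : ((n+1 : ℕ) : ℝ) > (|c0| + |c1| + |c2| + |c3|) / (-c4) := by
    push_cast; push_cast at hn; linarith
  set N := ((n+1:ℕ):ℝ) with hNdef
  have h1 : (1:ℝ) ≤ N := by rw [hNdef]; push_cast; linarith [Nat.cast_nonneg (α := ℝ) n]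
  have hNpos : (0:ℝ) < N := by linarith
  have h2 : (|c0| + |c1| + |c2| + |c3|) < N * (-c4) := (div_lt_iff₀ (by linarith)).mp hN
  have := h (n+1)
  have hN2 : N ≤ N^2 := by nlinarith
  have hN3 : N^2 ≤ N^3 := by nlinarith
  have k1 : c0 ≤ |c0| * N^3 := le_trans (le_abs_self c0) (le_mul_of_one_le_right (abs_nonneg _) (by nlinarith))
  have k2 : c1 * N ≤ |c1| * N^3 := by
    have : c1 * N ≤ |c1| * N := mul_le_mul_of_nonneg_right (le_abs_self c1) (le_of_lt hNpos)
    nlinarith [abs_nonneg c1]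
  have k3 : c2 * N^2 ≤ |c2| * N^3 := by
    have : c2 * N^2 ≤ |c2| * N^2 := mul_le_mul_of_nonneg_right (le_abs_self c2) (by positivity)
    nlinarith [abs_nonneg c2]
  have k4 : c3 * N^3 ≤ |c3| * N^3 := mul_le_mul_of_nonneg_right (le_abs_self c3) (by positivity)
  nlinarith [mul_lt_mul_of_pos_right h2 (pow_pos hNpos 3)]

lemma pow_formula (M : Matrix (Fin 3) (Fin 3) ℝ) (e : V) (fx : ℝ) (x : V)
    (hMe : M.mulVec e = e)
    (hsq : M.mulVec (M.mulVec x) = (2:ℝ) • M.mulVec x - x + fx • e) :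
    ∀ n : ℕ, (M^n).mulVec x
      = x + (n:ℝ) • (M.mulVec x - x) + ((n:ℝ)*((n:ℝ)-1)/2) • (fx • e) := by
  intro n
  induction n with
  | zero => simp
  | succ n ih =>
    have hstep : (M^(n+1)).mulVec x = M.mulVec ((M^n).mulVec x) := by
      rw [pow_succ', ← Matrix.mulVec_mulVec]
    rw [hstep, ih]
    rw [Matrix.mulVec_add, Matrix.mulVec_add, Matrix.mulVec_smul, Matrix.mulVec_smul,
      Matrix.mulVec_sub, hsq, Matrix.mulVec_smul, hMe]
    push_cast
    match_scalars <;> ring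

lemma repr_q (b : Module.Basis (Fin 3) ℝ V) (M : Matrix (Fin 3) (Fin 3) ℝ) (e : V) (fx : ℝ) (x : V)
    (hMe : M.mulVec e = e)
    (hsq : M.mulVec (M.mulVec x) = (2:ℝ) • M.mulVec x - x + fx • e) (n : ℕ) (i : Fin 3) :
    b.repr ((M^n).mulVec x) i
      = b.repr x i + (n:ℝ) * b.repr (M.mulVec x - x) i
        + ((n:ℝ)*((n:ℝ)-1)/2) * (fx * b.repr e i) := by
  rw [pow_formula M e fx x hMe hsq n]
  simp [map_add, _root_.map_smul, mul_assoc]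

lemma f_expand (b : Module.Basis (Fin 3) ℝ V) (f : V → ℝ) (hflin : IsLinearMap ℝ f) (x : V) :
    f x = b.repr x 0 * f (b 0) + b.repr x 1 * f (b 1) + b.repr x 2 * f (b 2) := by
  conv_lhs => rw [← b.sum_repr x]
  rw [Fin.sum_univ_three, hflin.map_add, hflin.map_add, hflin.map_smul, hflin.map_smul,
    hflin.map_smul]
  simp [smul_eq_mul]

lemma pow_mem (C : Set V) (M : Matrix (Fin 3) (Fin 3) ℝ)
    (hC : ∀ x ∈ C, M.mulVec x ∈ C) :
    ∀ n : ℕ, ∀ x ∈ C, (M^n).mulVec x ∈ C := by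
  intro n
  induction n with
  | zero => intro x hx; simpa using hx
  | succ n ih =>
    intro x hx
    have hstep : (M^(n+1)).mulVec x = M.mulVec ((M^n).mulVec x) := by
      rw [pow_succ', ← Matrix.mulVec_mulVec]
    rw [hstep]
    exact hC _ (ih x hx)

lemma esign (C : Set V) (b : Module.Basis (Fin 3) ℝ V)
    (hmem : ∀ x : V, x ∈ C ↔ ∀ i, 0 < b.repr x i)
    (M : Matrix (Fin 3) (Fin 3) ℝ) (e : V) (f : V → ℝ)
    (hflin : IsLinearMap ℝ f)
    (hMe : M.mulVec e = e)
    (hsq : ∀ x, M.mulVec (M.mulVec x) = (2:ℝ) • M.mulVec x - x + f x • e)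
    (hfne : ∃ z, f z ≠ 0)
    (hX : ∀ x : V, (x ∈ C ∨ -x ∈ C) → (M.mulVec x ∈ C ∨ -(M.mulVec x) ∈ C)) :
    (∀ i, 0 ≤ b.repr e i) ∨ (∀ i, b.repr e i ≤ 0) := by
  classical
  -- a basis vector with nonzero f
  have hfb : ∃ l, f (b l) ≠ 0 := by
    by_contra hall
    push_neg at hall
    obtain ⟨z, hz⟩ := hfne
    rw [f_expand b f hflin z, hall 0, hall 1, hall 2] at hz
    simp at hz
  obtain ⟨l, hl⟩ := hfb
  -- an element of C with nonzero f
  set x0 : V := b 0 + b 1 + b 2 with hx0def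
  have hx0r : ∀ i, b.repr x0 i = 1 := by
    intro i
    rw [hx0def]
    fin_cases i <;> simp [Module.Basis.repr_self, Finsupp.single_apply]
  have hx0 : x0 ∈ C := (hmem _).mpr (fun i => by rw [hx0r i]; norm_num)
  have hxex : ∃ x ∈ C, f x ≠ 0 := by
    by_cases hfx0 : f x0 = 0
    · refine ⟨x0 + b l, (hmem _).mpr (fun i => ?_), ?_⟩
      · have : b.repr (x0 + b l) i = 1 + b.repr (b l) i := by
          rw [map_add, Finsupp.add_apply, hx0r i]
        rw [this, Module.Basis.repr_self]
        rcases eq_or_ne l i with rfl | hne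
        · simp
        · simp [Finsupp.single_apply, hne]
      · rw [hflin.map_add, hfx0, zero_add]; exact hl
    · exact ⟨x0, hx0, hfx0⟩
  obtain ⟨x, hxC, hfx⟩ := hxex
  have hMn : ∀ n : ℕ, ((M^n).mulVec x ∈ C ∨ -((M^n).mulVec x) ∈ C) := by
    intro n
    induction n with
    | zero => left; simpa using hxC
    | succ n ih =>
      have hstep : (M^(n+1)).mulVec x = M.mulVec ((M^n).mulVec x) := by
        rw [pow_succ', ← Matrix.mulVec_mulVec]
      rw [hstep]
      exact hX _ ih
  set A : Fin 3 → ℝ := fun i => b.repr x i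
  set B : Fin 3 → ℝ := fun i => b.repr (M.mulVec x - x) i
  set E : Fin 3 → ℝ := fun i => b.repr e i
  have hq : ∀ (n : ℕ) (i : Fin 3), b.repr ((M^n).mulVec x) i
      = A i + (n:ℝ) * B i + ((n:ℝ)*((n:ℝ)-1)/2) * (f x * E i) :=
    fun n i => repr_q b M e (f x) x hMe (hsq x) n i
  have hprod : ∀ (n : ℕ) (i j : Fin 3),
      0 ≤ (b.repr ((M^n).mulVec x) i) * (b.repr ((M^n).mulVec x) j) := by
    intro n i j
    rcases hMn n with h | h
    · exact le_of_lt (mul_pos ((hmem _).mp h i) ((hmem _).mp h j))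
    · have hi := (hmem _).mp h i
      have hj := (hmem _).mp h j
      rw [map_neg, Finsupp.neg_apply] at hi hj
      nlinarith
  have key : ∀ i j : Fin 3, 0 ≤ E i * E j := by
    intro i j
    set F := f x
    have h4 := leadcoeff4 (A i * A j)
      (A i * (B j - F * E j / 2) + A j * (B i - F * E i / 2))
      (A i * (F * E j / 2) + A j * (F * E i / 2)
        + (B i - F * E i / 2) * (B j - F * E j / 2))
      ((B i - F * E i / 2) * (F * E j / 2) + (B j - F * E j / 2) * (F * E i / 2))
      ((F * E i / 2) * (F * E j / 2))
      (fun n => by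
        have hp := hprod n i j
        rw [hq n i, hq n j] at hp
        calc (0:ℝ) ≤ _ := hp
        _ = _ := by push_cast; ring)
    nlinarith [sq_nonneg F, hfx, sq_pos_of_ne_zero hfx]
  by_cases hA : ∀ i, 0 ≤ E i
  · exact Or.inl hA
  · push_neg at hA
    obtain ⟨i, hi⟩ := hA
    right
    intro j
    have := key i j
    nlinarith

lemma dichotomy (C : Set V) (b : Module.Basis (Fin 3) ℝ V)
    (hmem : ∀ x : V, x ∈ C ↔ ∀ i, 0 < b.repr x i)
    (M : Matrix (Fin 3) (Fin 3) ℝ)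
    (hX : ∀ x : V, (x ∈ C ∨ -x ∈ C) → (M.mulVec x ∈ C ∨ -(M.mulVec x) ∈ C)) :
    (∀ x ∈ C, M.mulVec x ∈ C) ∨ (∀ x ∈ C, -(M.mulVec x) ∈ C) := by
  by_cases hex : ∃ x ∈ C, M.mulVec x ∈ C
  · left
    obtain ⟨x, hxC, hMx⟩ := hex
    intro y hyC
    rcases hX y (Or.inl hyC) with h | h
    · exact h
    exfalso
    have ha : 0 < b.repr (M.mulVec x) 0 := (hmem _).mp hMx 0
    have hc : b.repr (M.mulVec y) 0 < 0 := by
      have := (hmem _).mp h 0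
      rw [map_neg, Finsupp.neg_apply] at this
      linarith
    set a := b.repr (M.mulVec x) 0
    set c := b.repr (M.mulVec y) 0
    have hden : 0 < a - c := by linarith
    set t := a / (a - c) with ht
    have ht0 : 0 < t := div_pos ha hden
    have ht1 : t < 1 := by rw [ht, div_lt_one hden]; linarith
    have hz : (1-t) • x + t • y ∈ C := by
      refine (hmem _).mpr (fun i => ?_)
      have h1 := (hmem _).mp hxC i
      have h2 := (hmem _).mp hyC i
      have : b.repr ((1-t) • x + t • y) i = (1-t) * b.repr x i + t * b.repr y i := by
        simp [map_add, _root_.map_smul]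
      rw [this]
      have := mul_pos (by linarith : (0:ℝ) < 1 - t) h1
      nlinarith
    have hcoord : b.repr (M.mulVec ((1-t) • x + t • y)) 0 = 0 := by
      rw [Matrix.mulVec_add, Matrix.mulVec_smul, Matrix.mulVec_smul]
      have : b.repr ((1-t) • M.mulVec x + t • M.mulVec y) 0 = (1-t) * a + t * c := by
        simp [map_add, _root_.map_smul]; rfl
      rw [this, ht]
      field_simp
      ring
    rcases hX _ (Or.inl hz) with h' | h'
    · have := (hmem _).mp h' 0
      rw [hcoord] at this
      exact lt_irrefl 0 this
    · have := (hmem _).mp h' 0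
      rw [map_neg, Finsupp.neg_apply, hcoord] at this
      simp at this
  · right
    push_neg at hex
    intro x hx
    rcases hX x (Or.inl hx) with h | h
    · exact absurd h (hex x hx)
    · exact h

def perm021 : Equiv.Perm (Fin 3) := ⟨![0,2,1], ![0,2,1], by decide, by decide⟩
def perm120 : Equiv.Perm (Fin 3) := ⟨![2,0,1], ![1,2,0], by decide, by decide⟩

lemma reindex_mem (C : Set V) (b : Module.Basis (Fin 3) ℝ V) (σ : Equiv.Perm (Fin 3))
    (hmem : ∀ x : V, x ∈ C ↔ ∀ i, 0 < b.repr x i) :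
    ∀ x : V, x ∈ C ↔ ∀ i, 0 < (b.reindex σ).repr x i := by
  intro x
  rw [hmem x]
  constructor
  · intro h i
    rw [Module.Basis.repr_reindex_apply]
    exact h _
  · intro h i
    have := h (σ i)
    rwa [Module.Basis.repr_reindex_apply, Equiv.symm_apply_apply] at this

lemma twopos (C : Set V) (c : Module.Basis (Fin 3) ℝ V)
    (hmem : ∀ x : V, x ∈ C ↔ ∀ i, 0 < c.repr x i)
    (M : Matrix (Fin 3) (Fin 3) ℝ) (e : V) (f : V → ℝ)
    (hflin : IsLinearMap ℝ f)
    (hMe : M.mulVec e = e)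
    (hsq : ∀ x, M.mulVec (M.mulVec x) = (2:ℝ) • M.mulVec x - x + f x • e)
    (hfM : ∀ x, f (M.mulVec x) = f x)
    (hker : ∀ x, M.mulVec x = x → ∃ t : ℝ, x = t • e)
    (hene : e ≠ 0)
    (hcone : ∀ x ∈ C, M.mulVec x ∈ C)
    (hf0 : f (c 0) = 0) (hf1 : f (c 1) = 0) (hf2 : f (c 2) ≠ 0)
    (he0 : 0 < c.repr e 0) (he1 : 0 < c.repr e 1) (he2 : c.repr e 2 = 0) : False := by
  classical
  set x0 : V := c 0 + c 1 + c 2 with hx0def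
  have hx0r : ∀ i, c.repr x0 i = 1 := by
    intro i
    rw [hx0def]
    fin_cases i <;> simp [Module.Basis.repr_self, Finsupp.single_apply]
  -- coordinates of M applied to basis vectors are nonnegative
  have hMc : ∀ l m : Fin 3, 0 ≤ c.repr (M.mulVec (c l)) m := by
    intro l m
    apply eps_nonneg _ (c.repr (M.mulVec x0) m)
    intro ε hε
    have hmem' : c l + ε • x0 ∈ C := by
      refine (hmem _).mpr (fun i => ?_)
      have : c.repr (c l + ε • x0) i = c.repr (c l) i + ε * c.repr x0 i := by
        simp [map_add, _root_.map_smul]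
      rw [this, hx0r i, Module.Basis.repr_self]
      rcases eq_or_ne l i with rfl | hne
      · simp; linarith
      · rw [Finsupp.single_apply, if_neg hne]; linarith
    have hmm := (hmem _).mp (hcone _ hmem') m
    have hrw : c.repr (M.mulVec (c l + ε • x0)) m
        = c.repr (M.mulVec (c l)) m + ε * c.repr (M.mulVec x0) m := by
      rw [Matrix.mulVec_add, Matrix.mulVec_smul]
      simp [map_add, _root_.map_smul]
    rw [hrw] at hmm
    linarith
  -- third coordinates of M (c 0), M (c 1) vanish
  have hs02 : c.repr (M.mulVec (c 0)) 2 = 0 := by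
    have hfe := f_expand c f hflin (M.mulVec (c 0))
    rw [hfM, hf0, hf1] at hfe
    simp at hfe
    rcases hfe with h | h
    · exact h
    · exact absurd h hf2
  have hs12 : c.repr (M.mulVec (c 1)) 2 = 0 := by
    have hfe := f_expand c f hflin (M.mulVec (c 1))
    rw [hfM, hf0, hf1] at hfe
    simp at hfe
    rcases hfe with h | h
    · exact h
    · exact absurd h hf2
  -- the displacement vectors are fixed by M, hence multiples of e
  set z1 : V := M.mulVec (c 0) - c 0 with hz1def
  set z2 : V := M.mulVec (c 1) - c 1 with hz2def
  have hz1fix : M.mulVec z1 = z1 := by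
    rw [hz1def, Matrix.mulVec_sub, hsq (c 0), hf0]
    match_scalars <;> ring
  have hz2fix : M.mulVec z2 = z2 := by
    rw [hz2def, Matrix.mulVec_sub, hsq (c 1), hf1]
    match_scalars <;> ring
  obtain ⟨lam, hlam⟩ := hker z1 hz1fix
  obtain ⟨mu, hmu⟩ := hker z2 hz2fix
  -- nonnegativity of lam and mu
  have hc01 : c.repr (c 0) 1 = 0 := by
    rw [Module.Basis.repr_self]; simp [Finsupp.single_apply]
  have hc10 : c.repr (c 1) 0 = 0 := by
    rw [Module.Basis.repr_self]; simp [Finsupp.single_apply]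
  have hlam_nonneg : 0 ≤ lam := by
    have h1 : c.repr z1 1 = c.repr (M.mulVec (c 0)) 1 := by
      rw [hz1def, map_sub, Finsupp.sub_apply, hc01, sub_zero]
    have h2 : c.repr z1 1 = lam * c.repr e 1 := by
      rw [hlam, _root_.map_smul]; simp
    have := hMc 0 1
    rw [← h1, h2] at this
    nlinarith
  have hmu_nonneg : 0 ≤ mu := by
    have h1 : c.repr z2 0 = c.repr (M.mulVec (c 1)) 0 := by
      rw [hz2def, map_sub, Finsupp.sub_apply, hc10, sub_zero]
    have h2 : c.repr z2 0 = mu * c.repr e 0 := by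
      rw [hmu, _root_.map_smul]; simp
    have := hMc 1 0
    rw [← h1, h2] at this
    nlinarith
  -- expansion of e
  have he_comb : e = c.repr e 0 • c 0 + c.repr e 1 • c 1 := by
    conv_lhs => rw [← c.sum_repr e]
    rw [Fin.sum_univ_three, he2]
    simp
  -- combine
  have h5 : c.repr e 0 • M.mulVec (c 0) + c.repr e 1 • M.mulVec (c 1) = e := by
    conv_rhs => rw [← hMe]
    conv_rhs => rw [he_comb]
    rw [Matrix.mulVec_add, Matrix.mulVec_smul, Matrix.mulVec_smul]
  have h6 : c.repr e 0 • z1 + c.repr e 1 • z2 = 0 := by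
    have heq : c.repr e 0 • z1 + c.repr e 1 • z2
        = (c.repr e 0 • M.mulVec (c 0) + c.repr e 1 • M.mulVec (c 1))
          - (c.repr e 0 • c 0 + c.repr e 1 • c 1) := by
      rw [hz1def, hz2def, smul_sub, smul_sub]
      abel
    rw [heq, h5, ← he_comb, sub_self]
  rw [hlam, hmu, smul_smul, smul_smul, ← add_smul] at h6
  have hco : c.repr e 0 * lam + c.repr e 1 * mu = 0 := by
    rcases smul_eq_zero.mp h6 with h | h
    · exact h
    · exact absurd h hene
  have hlam0 : lam = 0 := by nlinarith
  -- conclude c 0 is a multiple of e, contradiction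
  have hz10 : z1 = 0 := by rw [hlam, hlam0, zero_smul]
  have hMc0 : M.mulVec (c 0) = c 0 := by
    have := sub_eq_zero.mp hz10
    exact this
  obtain ⟨t, ht⟩ := hker (c 0) hMc0
  have ht0 : (1:ℝ) = t * c.repr e 0 := by
    have h1 : c.repr (c 0) 0 = t * c.repr e 0 := by rw [ht, _root_.map_smul]; simp
    have h2 : c.repr (c 0) 0 = 1 := by rw [Module.Basis.repr_self]; simp
    rw [← h2]; exact h1
  have ht1 : (0:ℝ) = t * c.repr e 1 := by
    have h1 : c.repr (c 0) 1 = t * c.repr e 1 := by rw [ht, _root_.map_smul]; simp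
    have h2 : c.repr (c 0) 1 = 0 := by
      rw [Module.Basis.repr_self, Finsupp.single_apply, if_neg]; decide
    rw [← h2]; exact h1
  rcases mul_eq_zero.mp ht1.symm with h | h
  · rw [h, zero_mul] at ht0; exact absurd ht0 (by norm_num)
  · rw [h] at he1; exact lt_irrefl 0 he1

lemma master_core (C : Set V) (b : Module.Basis (Fin 3) ℝ V)
    (hmem : ∀ x : V, x ∈ C ↔ ∀ i, 0 < b.repr x i)
    (M : Matrix (Fin 3) (Fin 3) ℝ) (e : V) (f : V → ℝ)
    (hflin : IsLinearMap ℝ f)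
    (hMe : M.mulVec e = e)
    (hsq : ∀ x, M.mulVec (M.mulVec x) = (2:ℝ) • M.mulVec x - x + f x • e)
    (hfM : ∀ x, f (M.mulVec x) = f x)
    (hker : ∀ x, M.mulVec x = x → ∃ t : ℝ, x = t • e)
    (hfe0 : f e = 0) (hfne : ∃ z, f z ≠ 0) (hene : e ≠ 0)
    (hcone : ∀ x ∈ C, M.mulVec x ∈ C)
    (he : ∀ i, 0 ≤ b.repr e i) :
    (∃ l : Fin 3, ∃ a : ℝ, 0 < a ∧ e = a • b l) ∧ (∀ x ∈ C, 0 ≤ f x) := by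
  classical
  have hpow := pow_mem C M hcone
  -- first conclusion of the quadratic growth argument
  have claim1 : ∀ x ∈ C, ∀ i : Fin 3, 0 ≤ f x * b.repr e i := by
    intro x hx i
    have h2 := leadcoeff2 (b.repr x i)
      (b.repr (M.mulVec x - x) i - f x * b.repr e i / 2) (f x * b.repr e i / 2)
      (fun n => by
        have hn := (hmem _).mp (hpow n x hx) i
        rw [repr_q b M e (f x) x hMe (hsq x) n i] at hn
        calc (0:ℝ) ≤ b.repr x i + (n:ℝ) * b.repr (M.mulVec x - x) i
            + ((n:ℝ)*((n:ℝ)-1)/2) * (f x * b.repr e i) := le_of_lt hn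
          _ = b.repr x i + (b.repr (M.mulVec x - x) i - f x * b.repr e i / 2) * n
              + (f x * b.repr e i / 2) * (n:ℝ)^2 := by push_cast; ring)
    linarith
  -- a strictly positive coordinate of e
  have hi0 : ∃ i0, 0 < b.repr e i0 := by
    by_contra hno
    push_neg at hno
    have hz : ∀ i, b.repr e i = 0 := fun i => le_antisymm (hno i) (he i)
    have : e = 0 := by
      conv_lhs => rw [← b.sum_repr e]
      rw [Fin.sum_univ_three, hz 0, hz 1, hz 2]
      simp
    exact hene this
  obtain ⟨i0, hi0⟩ := hi0
  have claim2 : ∀ x ∈ C, 0 ≤ f x := by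
    intro x hx
    have := claim1 x hx i0
    nlinarith
  refine ⟨?_, claim2⟩
  -- f is nonnegative on the closed cone generators
  set x0 : V := b 0 + b 1 + b 2 with hx0def
  have hx0r : ∀ i, b.repr x0 i = 1 := by
    intro i
    rw [hx0def]
    fin_cases i <;> simp [Module.Basis.repr_self, Finsupp.single_apply]
  have hepsC : ∀ (l : Fin 3) (ε : ℝ), 0 < ε → b l + ε • x0 ∈ C := by
    intro l ε hε
    refine (hmem _).mpr (fun i => ?_)
    have : b.repr (b l + ε • x0) i = b.repr (b l) i + ε * b.repr x0 i := by
      simp [map_add, _root_.map_smul]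
    rw [this, hx0r i, Module.Basis.repr_self]
    rcases eq_or_ne l i with rfl | hne
    · simp; linarith
    · rw [Finsupp.single_apply, if_neg hne]; linarith
  have fgen : ∀ l : Fin 3, 0 ≤ f (b l) := by
    intro l
    apply eps_nonneg _ (f x0)
    intro ε hε
    have := claim2 _ (hepsC l ε hε)
    rwa [hflin.map_add, hflin.map_smul, smul_eq_mul] at this
  -- the coordinates of e kill the generators with positive f
  have hsum : b.repr e 0 * f (b 0) + b.repr e 1 * f (b 1) + b.repr e 2 * f (b 2) = 0 := by
    have := f_expand b f hflin e
    rw [hfe0] at this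
    linarith
  have hterm : ∀ l : Fin 3, 0 ≤ b.repr e l * f (b l) :=
    fun l => mul_nonneg (he l) (fgen l)
  have h00 : b.repr e 0 * f (b 0) = 0 := by have := hterm 0; have := hterm 1; have := hterm 2; linarith
  have h11 : b.repr e 1 * f (b 1) = 0 := by have := hterm 0; have := hterm 1; have := hterm 2; linarith
  have h22 : b.repr e 2 * f (b 2) = 0 := by have := hterm 0; have := hterm 1; have := hterm 2; linarith
  have hfbne : ∃ l, f (b l) ≠ 0 := by
    by_contra hall
    push_neg at hall
    obtain ⟨z, hz⟩ := hfne
    rw [f_expand b f hflin z, hall 0, hall 1, hall 2] at hz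
    simp at hz
  -- single-coordinate conclusion helper
  have hone : ∀ l : Fin 3, (∀ m, m ≠ l → b.repr e m = 0) → 0 < b.repr e l →
      ∃ l' : Fin 3, ∃ a : ℝ, 0 < a ∧ e = a • b l' := by
    intro l hzero hpos
    refine ⟨l, b.repr e l, hpos, ?_⟩
    conv_lhs => rw [← b.sum_repr e]
    rw [Fin.sum_univ_three]
    fin_cases l
    · rw [hzero 1 (by decide), hzero 2 (by decide)]; simp
    · rw [hzero 0 (by decide), hzero 2 (by decide)]; simp
    · rw [hzero 0 (by decide), hzero 1 (by decide)]; simp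
  -- zero f on generators whose e-coordinate is positive
  have hfz : ∀ l : Fin 3, 0 < b.repr e l → f (b l) = 0 := by
    intro l hl
    have hterm0 : b.repr e l * f (b l) = 0 := by fin_cases l <;> assumption
    rcases mul_eq_zero.mp hterm0 with h | h
    · exact absurd h (ne_of_gt hl)
    · exact h
  -- case analysis on signs of coordinates of e
  rcases (he 0).lt_or_eq with h0 | h0 <;> rcases (he 1).lt_or_eq with h1 | h1 <;>
    rcases (he 2).lt_or_eq with h2 | h2
  -- all three positive: impossible
  · exfalso
    obtain ⟨l, hl⟩ := hfbne
    apply hl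
    fin_cases l
    · exact hfz 0 h0
    · exact hfz 1 h1
    · exact hfz 2 h2
  -- 0,1 positive, 2 zero : twopos with identity order
  · exfalso
    have hf2ne : f (b 2) ≠ 0 := by
      intro hcontra
      obtain ⟨l, hl⟩ := hfbne
      apply hl
      fin_cases l
      · exact hfz 0 h0
      · exact hfz 1 h1
      · exact hcontra
    exact twopos C b hmem M e f hflin hMe hsq hfM hker hene hcone
      (hfz 0 h0) (hfz 1 h1) hf2ne h0 h1 h2.symm
  -- 0,2 positive, 1 zero : twopos with permuted basis (0,2,1)
  · exfalso
    have hf1ne : f (b 1) ≠ 0 := by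
      intro hcontra
      obtain ⟨l, hl⟩ := hfbne
      apply hl
      fin_cases l
      · exact hfz 0 h0
      · exact hcontra
      · exact hfz 2 h2
    have hmem' := reindex_mem C b perm021 hmem
    have hc0 : (b.reindex perm021) 0 = b 0 := by simp [Module.Basis.reindex_apply, perm021]
    have hc1 : (b.reindex perm021) 1 = b 2 := by simp [Module.Basis.reindex_apply, perm021]
    have hc2 : (b.reindex perm021) 2 = b 1 := by simp [Module.Basis.reindex_apply, perm021]
    have hr0 : ∀ x : V, (b.reindex perm021).repr x 0 = b.repr x 0 := by
      intro x; rw [Module.Basis.repr_reindex_apply]; congr 1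
    have hr1 : ∀ x : V, (b.reindex perm021).repr x 1 = b.repr x 2 := by
      intro x; rw [Module.Basis.repr_reindex_apply]; congr 1
    have hr2 : ∀ x : V, (b.reindex perm021).repr x 2 = b.repr x 1 := by
      intro x; rw [Module.Basis.repr_reindex_apply]; congr 1
    refine twopos C (b.reindex perm021) hmem' M e f hflin hMe hsq hfM hker hene hcone
      ?_ ?_ ?_ ?_ ?_ ?_
    · rw [hc0]; exact hfz 0 h0
    · rw [hc1]; exact hfz 2 h2
    · rw [hc2]; exact hf1ne
    · rw [hr0]; exact h0
    · rw [hr1]; exact h2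
    · rw [hr2]; exact h1.symm
  -- only 0 positive
  · exact hone 0 (fun m hm => by
      fin_cases m <;> first | exact absurd rfl hm | exact h1.symm | exact h2.symm) h0
  -- 1,2 positive, 0 zero : twopos with permuted basis (1,2,0)
  · exfalso
    have hf0ne : f (b 0) ≠ 0 := by
      intro hcontra
      obtain ⟨l, hl⟩ := hfbne
      apply hl
      fin_cases l
      · exact hcontra
      · exact hfz 1 h1
      · exact hfz 2 h2
    have hmem' := reindex_mem C b perm120 hmem
    have hc0 : (b.reindex perm120) 0 = b 1 := by simp [Module.Basis.reindex_apply, perm120]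
    have hc1 : (b.reindex perm120) 1 = b 2 := by simp [Module.Basis.reindex_apply, perm120]
    have hc2 : (b.reindex perm120) 2 = b 0 := by simp [Module.Basis.reindex_apply, perm120]
    have hr0 : ∀ x : V, (b.reindex perm120).repr x 0 = b.repr x 1 := by
      intro x; rw [Module.Basis.repr_reindex_apply]; congr 1
    have hr1 : ∀ x : V, (b.reindex perm120).repr x 1 = b.repr x 2 := by
      intro x; rw [Module.Basis.repr_reindex_apply]; congr 1
    have hr2 : ∀ x : V, (b.reindex perm120).repr x 2 = b.repr x 0 := by
      intro x; rw [Module.Basis.repr_reindex_apply]; congr 1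
    refine twopos C (b.reindex perm120) hmem' M e f hflin hMe hsq hfM hker hene hcone
      ?_ ?_ ?_ ?_ ?_ ?_
    · rw [hc0]; exact hfz 1 h1
    · rw [hc1]; exact hfz 2 h2
    · rw [hc2]; exact hf0ne
    · rw [hr0]; exact h1
    · rw [hr1]; exact h2
    · rw [hr2]; exact h0.symm
  -- only 1 positive
  · exact hone 1 (fun m hm => by
      fin_cases m <;> first | exact absurd rfl hm | exact h0.symm | exact h2.symm) h1
  -- only 2 positive
  · exact hone 2 (fun m hm => by
      fin_cases m <;> first | exact absurd rfl hm | exact h0.symm | exact h1.symm) h2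
  -- all zero: impossible
  · exfalso
    apply hene
    conv_lhs => rw [← b.sum_repr e]
    rw [Fin.sum_univ_three, ← h0, ← h1, ← h2]
    simp

lemma master (C : Set V) (b : Module.Basis (Fin 3) ℝ V)
    (hmem : ∀ x : V, x ∈ C ↔ ∀ i, 0 < b.repr x i)
    (M : Matrix (Fin 3) (Fin 3) ℝ) (e : V) (f : V → ℝ)
    (hflin : IsLinearMap ℝ f)
    (hMe : M.mulVec e = e)
    (hsq : ∀ x, M.mulVec (M.mulVec x) = (2:ℝ) • M.mulVec x - x + f x • e)
    (hfM : ∀ x, f (M.mulVec x) = f x)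
    (hker : ∀ x, M.mulVec x = x → ∃ t : ℝ, x = t • e)
    (hfe0 : f e = 0) (hfne : ∃ z, f z ≠ 0) (hene : e ≠ 0)
    (hX : ∀ x : V, (x ∈ C ∨ -x ∈ C) → (M.mulVec x ∈ C ∨ -(M.mulVec x) ∈ C))
    (he : ∀ i, 0 ≤ b.repr e i) :
    (∃ l : Fin 3, ∃ a : ℝ, 0 < a ∧ e = a • b l) ∧ (∀ x ∈ C, 0 ≤ f x) := by
  rcases dichotomy C b hmem M hX with hc | hc
  · exact master_core C b hmem M e f hflin hMe hsq hfM hker hfe0 hfne hene hc he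
  · set M2 := M * M with hM2def
    have hM2v : ∀ x : V, M2.mulVec x = M.mulVec (M.mulVec x) := by
      intro x; rw [hM2def, ← Matrix.mulVec_mulVec]
    have hcone2 : ∀ x ∈ C, M2.mulVec x ∈ C := by
      intro x hx
      rw [hM2v]
      have h1 := hc x hx
      have h2 := hc _ h1
      rw [Matrix.mulVec_neg, neg_neg] at h2
      exact h2
    have hMe2 : M2.mulVec e = e := by rw [hM2v, hMe, hMe]
    have h3 : ∀ x : V, M.mulVec (M.mulVec (M.mulVec x))
        = (3:ℝ) • M.mulVec x - (2:ℝ) • x + (3 * f x) • e := by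
      intro x
      have hh := hsq (M.mulVec x)
      rw [hfM] at hh
      rw [hh, hsq x]
      match_scalars <;> ring
    have h4 : ∀ x : V, M.mulVec (M.mulVec (M.mulVec (M.mulVec x)))
        = (4:ℝ) • M.mulVec x - (3:ℝ) • x + (6 * f x) • e := by
      intro x
      have hh := h3 (M.mulVec x)
      rw [hfM] at hh
      rw [hh, hsq x]
      match_scalars <;> ring
    have hsq2 : ∀ x : V, M2.mulVec (M2.mulVec x)
        = (2:ℝ) • M2.mulVec x - x + (4 * f x) • e := by
      intro x
      simp only [hM2v]
      rw [h4 x, hsq x]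
      match_scalars <;> ring
    have hfM2 : ∀ x : V, f (M2.mulVec x) = f x := by
      intro x; rw [hM2v, hfM, hfM]
    have hker2 : ∀ x : V, M2.mulVec x = x → ∃ t : ℝ, x = t • e := by
      intro x hx
      rw [hM2v] at hx
      have h1 := hsq x
      rw [hx] at h1
      have hMx : M.mulVec x = x - (f x / 2) • e := by
        funext i
        have := congrFun h1 i
        simp only [Pi.add_apply, Pi.sub_apply, Pi.smul_apply, smul_eq_mul] at this ⊢
        linarith
      have h3' : M.mulVec (M.mulVec x) = x - f x • e := by
        rw [hMx, Matrix.mulVec_sub, Matrix.mulVec_smul, hMe, hMx]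
        match_scalars <;> ring
      rw [hx] at h3'
      have h4' : f x • e = 0 := by
        have := sub_eq_self.mp h3'.symm
        exact this
      rcases smul_eq_zero.mp h4' with h | h
      · apply hker
        rw [hMx, h]
        simp
      · exact absurd h hene
    have hflin2 : IsLinearMap ℝ (fun x => 4 * f x) := by
      constructor
      · intro x y; rw [hflin.map_add]; ring
      · intro c x; rw [hflin.map_smul]; simp [smul_eq_mul]; ring
    have hfe02 : 4 * f e = 0 := by rw [hfe0]; ring
    have hfne2 : ∃ z, 4 * f z ≠ 0 := by
      obtain ⟨z, hz⟩ := hfne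
      exact ⟨z, by intro h; apply hz; linarith⟩
    obtain ⟨hmain, hpos⟩ := master_core C b hmem M2 e (fun x => 4 * f x) hflin2
      hMe2 hsq2 (fun x => by rw [hfM2 x]) hker2 hfe02 hfne2 hene hcone2 he
    exact ⟨hmain, fun x hx => by have := hpos x hx; linarith⟩

lemma cone_mem_iff (u' v' w' : V) (b : Module.Basis (Fin 3) ℝ V)
    (hb : ∀ i, b i = ![u', v', w'] i) (x : V) :
    x ∈ cone3 u' v' w' ↔ ∀ i, 0 < b.repr x i := mem_cone_iff u' v' w' b hb x

lemma X_iff (u' v' w' : V) (x : V) :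
    x ∈ Xset u' v' w' ↔ (x ∈ cone3 u' v' w' ∨ -x ∈ cone3 u' v' w') := by
  rw [Xset, Set.mem_union, Set.mem_neg]

lemma AA_X (u' v' w' : V) (hvalid : IsValidTable u' v' w') :
    ∀ x ∈ Xset u' v' w', AA.mulVec x ∈ Xset u' v' w' := by
  intro x hx
  have h1 : R.mulVec x ∈ Yset u' v' w' := Or.inl (Or.inl ⟨x, hx, rfl⟩)
  have h2 : T.mulVec (R.mulVec x) ∈ Xset u' v' w' := hvalid.2 ⟨_, h1, rfl⟩
  have h3 : AA.mulVec x = T.mulVec (R.mulVec x) := by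
    rw [AA, ← Matrix.mulVec_mulVec]
  rwa [h3]

lemma BB_X (u' v' w' : V) (hvalid : IsValidTable u' v' w') :
    ∀ x ∈ Xset u' v' w', BB.mulVec x ∈ Xset u' v' w' := by
  intro x hx
  have h1 : (R^3).mulVec x ∈ Yset u' v' w' := Or.inr ⟨x, hx, rfl⟩
  have h2 : T.mulVec ((R^3).mulVec x) ∈ Xset u' v' w' := hvalid.2 ⟨_, h1, rfl⟩
  have h3 : BB.mulVec x = T.mulVec ((R^3).mulVec x) := by
    rw [BB, ← Matrix.mulVec_mulVec]
  rwa [h3]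

lemma AA_X' (u' v' w' : V) (hvalid : IsValidTable u' v' w') (b : Module.Basis (Fin 3) ℝ V)
    (hb : ∀ i, b i = ![u', v', w'] i) :
    ∀ x : V, (x ∈ cone3 u' v' w' ∨ -x ∈ cone3 u' v' w') →
      (AA.mulVec x ∈ cone3 u' v' w' ∨ -(AA.mulVec x) ∈ cone3 u' v' w') := by
  intro x hx
  have := AA_X u' v' w' hvalid x ((X_iff u' v' w' x).mpr hx)
  exact (X_iff u' v' w' _).mp this

lemma BB_X' (u' v' w' : V) (hvalid : IsValidTable u' v' w') (b : Module.Basis (Fin 3) ℝ V)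
    (hb : ∀ i, b i = ![u', v', w'] i) :
    ∀ x : V, (x ∈ cone3 u' v' w' ∨ -x ∈ cone3 u' v' w') →
      (BB.mulVec x ∈ cone3 u' v' w' ∨ -(BB.mulVec x) ∈ cone3 u' v' w') := by
  intro x hx
  have := BB_X u' v' w' hvalid x ((X_iff u' v' w' x).mpr hx)
  exact (X_iff u' v' w' _).mp this

lemma aux (u' v' w' : V) (hind : LinearIndependent ℝ ![u', v', w'])
    (hvalid : IsValidTable u' v' w')
    (hu : ∃ α β γ : ℝ, 0 ≤ α ∧ 0 ≤ β ∧ 0 ≤ γ ∧ uu = α • u' + β • v' + γ • w') :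
    ∃ p ∈ ({u', v', w'} : Set V), ∃ q ∈ ({u', v', w'} : Set V), p ≠ q ∧
      (∃ a : ℝ, 0 < a ∧ p = a • uu) ∧ (∃ c : ℝ, 0 < c ∧ q = c • vv) := by
  classical
  set b : Module.Basis (Fin 3) ℝ V := basisOfLinearIndependentOfCardEqFinrank hind (by simp)
    with hbdef
  have hb : ∀ i, b i = ![u', v', w'] i := by
    intro i; rw [hbdef, coe_basisOfLinearIndependentOfCardEqFinrank]
  have hmem := cone_mem_iff u' v' w' b hb
  have hXA := AA_X' u' v' w' hvalid b hb
  have hXB := BB_X' u' v' w' hvalid b hb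
  -- coordinates of uu are nonnegative
  have huc : ∀ i, 0 ≤ b.repr uu i := by
    obtain ⟨α, β, γ, hα, hβ, hγ, hcomb⟩ := hu
    intro i
    rw [hcomb, repr_comb u' v' w' b hb α β γ i]
    fin_cases i <;> simpa
  -- master lemma for AA
  obtain ⟨⟨l, a, ha, hue⟩, hffpos⟩ := master (cone3 u' v' w') b hmem AA uu ff
    ff_lin AA_u AA_sq ff_AA ker_AA ff_uu ff_ne uu_ne hXA huc
  -- sign analysis for vv
  have hvsign := esign (cone3 u' v' w') b hmem BB vv hh hh_lin BB_v BB_sq hh_ne hXB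
  have hvc : ∀ i, 0 ≤ b.repr vv i := by
    rcases hvsign with h | h
    · exact h
    exfalso
    -- build a cone point with negative ff
    set x0 : V := b 0 + b 1 + b 2 with hx0def
    have hx0r : ∀ i, b.repr x0 i = 1 := by
      intro i
      rw [hx0def]
      fin_cases i <;> simp [Module.Basis.repr_self, Finsupp.single_apply]
    set ε : ℝ := 1/(1 + |ff x0|) with hεdef
    have hεpos : 0 < ε := by rw [hεdef]; positivity
    set y : V := -vv + ε • x0 with hydef
    have hyC : y ∈ cone3 u' v' w' := by
      refine (hmem y).mpr (fun i => ?_)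
      have : b.repr y i = -(b.repr vv i) + ε * b.repr x0 i := by
        rw [hydef]; simp [map_add, _root_.map_smul]
      rw [this, hx0r i]
      have := h i
      linarith
    have hb1 : ε * ff x0 < 1 := by
      have h1 : ε * ff x0 ≤ ε * |ff x0| := mul_le_mul_of_nonneg_left (le_abs_self _) (le_of_lt hεpos)
      have h2 : ε * |ff x0| < 1 := by
        rw [hεdef, one_div, inv_mul_eq_div, div_lt_one (by positivity)]
        linarith [abs_nonneg (ff x0)]
      linarith
    have hfy : ff y = -4 + ε * ff x0 := by
      rw [hydef, ff_lin.map_add, ff_lin.map_neg, ff_lin.map_smul, ff_vv, smul_eq_mul]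
    have := hffpos y hyC
    rw [hfy] at this
    linarith
  -- master lemma for BB
  obtain ⟨⟨l', a', ha', hve⟩, _⟩ := master (cone3 u' v' w') b hmem BB vv hh
    hh_lin BB_v BB_sq hh_BB ker_BB hh_vv hh_ne vv_ne hXB hvc
  -- assemble
  have hmemset : ∀ m : Fin 3, b m ∈ ({u', v', w'} : Set V) := by
    intro m
    have h0 : b 0 = u' := hb 0
    have h1 : b 1 = v' := hb 1
    have h2 : b 2 = w' := hb 2
    fin_cases m
    · show b 0 ∈ ({u', v', w'} : Set V); rw [h0]; simp
    · show b 1 ∈ ({u', v', w'} : Set V); rw [h1]; simp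
    · show b 2 ∈ ({u', v', w'} : Set V); rw [h2]; simp
  refine ⟨b l, hmemset l, b l', hmemset l', ?_, ?_, ?_⟩
  · -- b l ≠ b l'
    intro hpq
    have h1 : a' • uu = a' • (a • b l) := by rw [← hue]
    have h2 : a • vv = a • (a' • b l') := by rw [← hve]
    rw [hpq] at h1
    have h3 : a' • uu = a • vv := by
      rw [h1, h2, smul_smul, smul_smul, mul_comm]
    have h4 := congrFun h3 1
    have h5 : uu 1 = -2 := by norm_num [uu, Matrix.cons_val_two]
    have h6 : vv 1 = 0 := by norm_num [vv, Matrix.cons_val_two]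
    simp only [Pi.smul_apply, smul_eq_mul, h5, h6] at h4
    nlinarith
  · refine ⟨a⁻¹, inv_pos.mpr ha, ?_⟩
    rw [hue, smul_smul, inv_mul_cancel₀ (ne_of_gt ha), one_smul]
  · refine ⟨a'⁻¹, inv_pos.mpr ha', ?_⟩
    rw [hve, smul_smul, inv_mul_cancel₀ (ne_of_gt ha'), one_smul]

lemma cone_neg (u' v' w' : V) :
    cone3 (-u') (-v') (-w') = -(cone3 u' v' w') := by
  ext x
  rw [Set.mem_neg]
  constructor
  · rintro ⟨a, c, d, ha, hc, hd, rfl⟩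
    refine ⟨a, c, d, ha, hc, hd, ?_⟩
    funext i
    simp
    ring
  · rintro ⟨a, c, d, ha, hc, hd, hx⟩
    refine ⟨a, c, d, ha, hc, hd, ?_⟩
    funext i
    have := congrFun hx i
    simp only [Pi.neg_apply, Pi.add_apply, Pi.smul_apply, smul_eq_mul] at this ⊢
    linarith

lemma Xset_neg (u' v' w' : V) : Xset (-u') (-v') (-w') = Xset u' v' w' := by
  rw [Xset, Xset, cone_neg]
  rw [Set.union_comm]
  congr 1
  simp

lemma valid_neg (u' v' w' : V) (hvalid : IsValidTable u' v' w') :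
    IsValidTable (-u') (-v') (-w') := by
  have hX := Xset_neg u' v' w'
  have hY : Yset (-u') (-v') (-w') = Yset u' v' w' := by
    rw [Yset, Yset, hX]
  exact ⟨by rw [hX, hY]; exact hvalid.1, by rw [hX, hY]; exact hvalid.2⟩

lemma neg_indep (u' v' w' : V) (hind : LinearIndependent ℝ ![u', v', w']) :
    LinearIndependent ℝ ![-u', -v', -w'] := by
  have hneg : ∀ i, ![-u', -v', -w'] i = -(![u', v', w'] i) := by
    intro i; fin_cases i <;> simp
  rw [Fintype.linearIndependent_iff] at hind ⊢
  intro g hg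
  have : ∑ i, (-(g i)) • ![u', v', w'] i = 0 := by
    rw [← hg]
    apply Finset.sum_congr rfl
    intro i _
    rw [hneg i]
    simp
  intro i
  have := hind (fun i => -(g i)) this i
  simpa using this

end
end ConeInv

/-- Part (c) of the lemma: for a valid ping-pong table, after possibly replacing
`(u',v',w')` by `(−u',−v',−w')`, two of the three generators of `C'` are positive
scalar multiples of `u = (1,-2,1)` and `v = (1,0,3)` respectively. -/
theorem cone_invariance_c (u' v' w' : Fin 3 → ℝ)
    (hind : LinearIndependent ℝ ![u', v', w'])
    (hvalid : IsValidTable u' v' w') :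
    ∃ s : ℝ, (s = 1 ∨ s = -1) ∧
      ∃ p ∈ ({u', v', w'} : Set (Fin 3 → ℝ)), ∃ q ∈ ({u', v', w'} : Set (Fin 3 → ℝ)),
        p ≠ q ∧
        (∃ a : ℝ, 0 < a ∧ s • p = a • (![1,-2,1] : Fin 3 → ℝ)) ∧
        (∃ b : ℝ, 0 < b ∧ s • q = b • (![1,0,3] : Fin 3 → ℝ)) := by
  classical
  set b : Module.Basis (Fin 3) ℝ (Fin 3 → ℝ) := basisOfLinearIndependentOfCardEqFinrank hind (by simp)
    with hbdef
  have hb : ∀ i, b i = ![u', v', w'] i := by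
    intro i; rw [hbdef, coe_basisOfLinearIndependentOfCardEqFinrank]
  have hmem := ConeInv.cone_mem_iff u' v' w' b hb
  have hXA := ConeInv.AA_X' u' v' w' hvalid b hb
  have husign := ConeInv.esign (cone3 u' v' w') b hmem ConeInv.AA ConeInv.uu ConeInv.ff
    ConeInv.ff_lin ConeInv.AA_u ConeInv.AA_sq ConeInv.ff_ne hXA
  have hsum : ConeInv.uu = b.repr ConeInv.uu 0 • u' + b.repr ConeInv.uu 1 • v'
      + b.repr ConeInv.uu 2 • w' := by
    conv_lhs => rw [← b.sum_repr ConeInv.uu]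
    rw [Fin.sum_univ_three, hb 0, hb 1, hb 2]
    rfl
  rcases husign with hpos | hneg
  · obtain ⟨p, hp, q, hq, hne, ⟨a, ha, hpa⟩, ⟨c, hc, hqc⟩⟩ :=
      ConeInv.aux u' v' w' hind hvalid
        ⟨b.repr ConeInv.uu 0, b.repr ConeInv.uu 1, b.repr ConeInv.uu 2,
          hpos 0, hpos 1, hpos 2, hsum⟩
    exact ⟨1, Or.inl rfl, p, hp, q, hq, hne,
      ⟨a, ha, by rw [one_smul]; exact hpa⟩, ⟨c, hc, by rw [one_smul]; exact hqc⟩⟩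
  · have hu' : ∃ α β γ : ℝ, 0 ≤ α ∧ 0 ≤ β ∧ 0 ≤ γ ∧
        ConeInv.uu = α • (-u') + β • (-v') + γ • (-w') := by
      refine ⟨-(b.repr ConeInv.uu 0), -(b.repr ConeInv.uu 1), -(b.repr ConeInv.uu 2),
        by linarith [hneg 0], by linarith [hneg 1], by linarith [hneg 2], ?_⟩
      rw [neg_smul_neg, neg_smul_neg, neg_smul_neg]
      exact hsum
    obtain ⟨p, hp, q, hq, hne, ⟨a, ha, hpa⟩, ⟨c, hc, hqc⟩⟩ :=
      ConeInv.aux (-u') (-v') (-w') (ConeInv.neg_indep u' v' w' hind)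
        (ConeInv.valid_neg u' v' w' hvalid) hu'
    have hpmem : -p ∈ ({u', v', w'} : Set (Fin 3 → ℝ)) := by
      simp only [Set.mem_insert_iff, Set.mem_singleton_iff] at hp ⊢
      rcases hp with rfl | rfl | rfl
      · left; rw [neg_neg]
      · right; left; rw [neg_neg]
      · right; right; rw [neg_neg]
    have hqmem : -q ∈ ({u', v', w'} : Set (Fin 3 → ℝ)) := by
      simp only [Set.mem_insert_iff, Set.mem_singleton_iff] at hq ⊢
      rcases hq with rfl | rfl | rfl
      · left; rw [neg_neg]
      · right; left; rw [neg_neg]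
      · right; right; rw [neg_neg]
    refine ⟨-1, Or.inr rfl, -p, hpmem, -q, hqmem, ?_, ?_, ?_⟩
    · intro hcon
      exact hne (neg_injective hcon)
    · refine ⟨a, ha, ?_⟩
      have : (-1 : ℝ) • (-p) = p := by simp
      rw [this]
      exact hpa
    · refine ⟨c, hc, ?_⟩
      have : (-1 : ℝ) • (-q) = q := by simp
      rw [this]
      exact hqc
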